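/- arXiv:1606.08909 — 2 statements merged into one kernel-verified Lean document; each statement's English description precedes it below -/
import Mathlib

section
/- Let \(\mathcal{D}\) be a 2-(v,k,\u03bb) design with b blocks in which every point lies in exactly r blocks, and let \(C_1 \subseteq \mathbb{F}_2^v\) be the linear span of the characteristic vectors of the blocks of \(\mathcal{D}\). Then every nonzero vector x in the dual code \(C_1^{\perp}\) satisfies \(\lambda \cdot \mathrm{wt}(x) \ge r + \lambda\), i.e., the minimum weight of \(C_1^{\perp}\) is at least \((r+\lambda)/\lambda\). -/
/-- The weight of a binary vector: its number of nonzero coordinates. -/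
def wt {ι : Type*} [Fintype ι] (x : ι → ZMod 2) : ℕ :=
  (Finset.univ.filter fun i => x i ≠ 0).card

/-- The characteristic vector of a block. -/
def chi {v : ℕ} (b : Finset (Fin v)) : Fin v → ZMod 2 :=
  fun i => if i ∈ b then 1 else 0

/-!
Fix a point `p` of the support `S` of `x`. Orthogonality to the characteristic vector of a
block says that the block meets `S` in an even number of points, so every one of the `r` blocks
through `p` contains a second point `q ∈ S`. Each of the `wt x - 1` pairs `{p, q}` lies in only
`λ` blocks, hence `r ≤ λ (wt x - 1)`.
-/

open Finset

theorem ZMod.two_sum_eq_card_filter_ne_zero {ι : Type*} (s : Finset ι) (x : ι → ZMod 2) :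
    ∑ i ∈ s, x i = (#{i ∈ s | x i ≠ 0} : ZMod 2) := by
  have hbool : ∀ a : ZMod 2, a = if a ≠ 0 then 1 else 0 := by decide
  rw [Finset.sum_congr rfl fun i _ => hbool (x i), Finset.sum_boole]

theorem sum_mul_chi {v : ℕ} (x : Fin v → ZMod 2) (b : Finset (Fin v)) :
    ∑ i, x i * chi b i = ∑ i ∈ b, x i := by
  simp only [chi, mul_ite, mul_one, mul_zero, Finset.sum_ite_mem, Finset.univ_inter]

theorem even_card_filter_ne_zero_of_sum_mul_chi_eq_zero {v : ℕ} {x : Fin v → ZMod 2}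
    {b : Finset (Fin v)} (h : ∑ i, x i * chi b i = 0) : Even #{i ∈ b | x i ≠ 0} := by
  rwa [sum_mul_chi, ZMod.two_sum_eq_card_filter_ne_zero, ZMod.natCast_eq_zero_iff_even] at h

theorem Finset.exists_mem_ne_of_even_card {α : Type*} {s : Finset α} (hs : Even #s) {p : α}
    (hp : p ∈ s) : ∃ q ∈ s, q ≠ p := by
  have hpos : 0 < #s := card_pos.mpr ⟨p, hp⟩
  exact s.exists_mem_ne (by obtain ⟨m, hm⟩ := hs; omega) p

theorem card_filter_mem_le_sum_card_filter_pair_subset {α : Type*} [DecidableEq α]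
    (𝓑 : Finset (Finset α)) (S : Finset α) {p : α}
    (hmeets : ∀ b ∈ 𝓑, p ∈ b → ∃ q ∈ b ∩ S, q ≠ p) :
    #{b ∈ 𝓑 | p ∈ b} ≤ ∑ q ∈ S.erase p, #{b ∈ 𝓑 | {p, q} ⊆ b} := by
  refine (card_le_card fun b hb => ?_).trans card_biUnion_le
  obtain ⟨hb𝓑, hpb⟩ := mem_filter.mp hb
  obtain ⟨q, hq, hqp⟩ := hmeets b hb𝓑 hpb
  obtain ⟨hqb, hqS⟩ := mem_inter.mp hq
  exact mem_biUnion.mpr ⟨q, mem_erase.mpr ⟨hqp, hqS⟩,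
    mem_filter.mpr ⟨hb𝓑, insert_subset hpb (singleton_subset_iff.mpr hqb)⟩⟩

theorem dual_C1_min_weight_general (v lam r : ℕ) (𝓑 : Finset (Finset (Fin v)))
    (hlam : ∀ T : Finset (Fin v), T.card = 2 → (𝓑.filter fun b => T ⊆ b).card = lam)
    (hr : ∀ p : Fin v, (𝓑.filter fun b => p ∈ b).card = r)
    (x : Fin v → ZMod 2) (hx : x ≠ 0)
    (hdual : ∀ y ∈ Submodule.span (ZMod 2) (chi '' (𝓑 : Set (Finset (Fin v)))),
      ∑ i, x i * y i = 0) :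
    r + lam ≤ lam * wt x := by
  classical
  set S : Finset (Fin v) := {i | x i ≠ 0}
  obtain ⟨p, hp⟩ := Function.ne_iff.mp hx
  have hpS : p ∈ S := by simpa [S] using hp
  have hmeets : ∀ b ∈ 𝓑, p ∈ b → ∃ q ∈ b ∩ S, q ≠ p := fun b hb hpb => by
    have heven := even_card_filter_ne_zero_of_sum_mul_chi_eq_zero
      (hdual _ (Submodule.subset_span ⟨b, hb, rfl⟩))
    simpa [S, filter_mem_eq_inter] using exists_mem_ne_of_even_card heven (mem_filter.mpr ⟨hpb, hp⟩)
  have hcount : r ≤ lam * (wt x - 1) := calc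
    r = #{b ∈ 𝓑 | p ∈ b} := (hr p).symm
    _ ≤ ∑ q ∈ S.erase p, #{b ∈ 𝓑 | {p, q} ⊆ b} :=
      card_filter_mem_le_sum_card_filter_pair_subset 𝓑 S hmeets
    _ = lam * (wt x - 1) := by
      rw [sum_congr rfl fun q hq => hlam _ (card_pair (ne_of_mem_erase hq).symm), sum_const,
        card_erase_of_mem hpS, smul_eq_mul, mul_comm]
      rfl
  have hwt : 1 ≤ wt x := card_pos.mpr ⟨p, hpS⟩
  calc r + lam ≤ lam * (wt x - 1) + lam := Nat.add_le_add_right hcount lam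
    _ = lam * wt x := by rw [← mul_add_one, Nat.sub_add_cancel hwt]

/-- If `𝓑` is the block set of a 2-(v,k,λ) design with `b` blocks and replication
number `r`, and `C₁` is the binary code spanned by the characteristic vectors of the
blocks, then every nonzero vector `x` of the dual code `C₁^⊥` satisfies
`λ · wt(x) ≥ r + λ`, i.e. the minimum weight of `C₁^⊥` is at least `(r + λ)/λ`. -/
theorem dual_C1_min_weight (v k lam r : ℕ) (𝓑 : Finset (Finset (Fin v)))
    (hk : ∀ b ∈ 𝓑, b.card = k)
    (hlam : ∀ T : Finset (Fin v), T.card = 2 → (𝓑.filter fun b => T ⊆ b).card = lam)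
    (hr : ∀ p : Fin v, (𝓑.filter fun b => p ∈ b).card = r)
    (x : Fin v → ZMod 2) (hx : x ≠ 0)
    (hdual : ∀ y ∈ Submodule.span (ZMod 2) (chi '' (𝓑 : Set (Finset (Fin v)))),
      ∑ i, x i * y i = 0) :
    r + lam ≤ lam * wt x :=
  dual_C1_min_weight_general v lam r 𝓑 hlam hr x hx hdual
end

section
/- Let \(\mathcal{D}\) be a quasi-symmetric 2-(v,k,\u03bb) design with intersection numbers x and y, where \(k \equiv 1 \pmod 4\) and both x and y are odd. Then the linear span \(C_3 \subseteq \mathbb{F}_2^{v+3}\) of the vectors \((\chi_B, 1, 1, 1)\), where \(\chi_B\) ranges over the characteristic vectors of the blocks of \(\mathcal{D}\), is a doubly even code: every codeword of \(C_3\) has weight divisible by 4. -/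
/-- The generator `(χ_B, 1, 1, 1)` of the code `C₃ ⊆ 𝔽₂^{v+3}`. -/
def gen3 {v : ℕ} (b : Finset (Fin v)) : Fin v ⊕ Fin 3 → ZMod 2 :=
  Sum.elim (chi b) fun _ => 1

open Finset Matrix

section BinaryCode

variable {ι : Type*} [Fintype ι]

theorem ZMod.sum_eq_hammingNorm (c : ι → ZMod 2) : ∑ i, c i = hammingNorm c := by
  rw [hammingNorm, card_filter, Nat.cast_sum]
  refine sum_congr rfl fun i _ => ?_
  generalize c i = a
  revert a
  decide

theorem ZMod.dotProduct_eq_hammingNorm_mul (c d : ι → ZMod 2) :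
    c ⬝ᵥ d = hammingNorm (c * d) :=
  ZMod.sum_eq_hammingNorm (c * d)

theorem ZMod.hammingNorm_add_add_two_mul_hammingNorm_mul (c d : ι → ZMod 2) :
    hammingNorm (c + d) + 2 * hammingNorm (c * d) = hammingNorm c + hammingNorm d := by
  simp only [hammingNorm, card_filter, mul_sum, ← sum_add_distrib]
  refine sum_congr rfl fun i _ => ?_
  have key : ∀ a b : ZMod 2, (if a + b ≠ 0 then 1 else 0) + 2 * (if a * b ≠ 0 then 1 else 0) =
      (if a ≠ 0 then 1 else 0) + (if b ≠ 0 then 1 else 0) := by decide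
  exact key (c i) (d i)

theorem ZMod.four_dvd_hammingNorm_add {c d : ι → ZMod 2} (hc : 4 ∣ hammingNorm c)
    (hd : 4 ∣ hammingNorm d) (hcd : c ⬝ᵥ d = 0) : 4 ∣ hammingNorm (c + d) := by
  rw [ZMod.dotProduct_eq_hammingNorm_mul, ZMod.natCast_eq_zero_iff] at hcd
  have := ZMod.hammingNorm_add_add_two_mul_hammingNorm_mul c d
  omega

theorem dotProduct_eq_zero_of_mem_span {R : Type*} [CommSemiring R] {S : Set (ι → R)}
    (hS : ∀ s ∈ S, ∀ t ∈ S, s ⬝ᵥ t = 0) {c d : ι → R} (hc : c ∈ Submodule.span R S)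
    (hd : d ∈ Submodule.span R S) : c ⬝ᵥ d = 0 := by
  induction hc, hd using Submodule.span_induction₂ with
  | mem_mem s t hs ht => exact hS s hs t ht
  | zero_left | zero_right => simp
  | add_left | add_right => simp_all [add_dotProduct, dotProduct_add]
  | smul_left | smul_right => simp_all [smul_dotProduct, dotProduct_smul]

theorem ZMod.four_dvd_hammingNorm_of_mem_span {S : Set (ι → ZMod 2)}
    (hweight : ∀ s ∈ S, 4 ∣ hammingNorm s) (horth : ∀ s ∈ S, ∀ t ∈ S, s ⬝ᵥ t = 0)
    {c : ι → ZMod 2} (hc : c ∈ Submodule.span (ZMod 2) S) : 4 ∣ hammingNorm c := by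
  induction hc using Submodule.span_induction with
  | mem s hs => exact hweight s hs
  | zero => simp
  | add c d hc hd ihc ihd =>
    exact ZMod.four_dvd_hammingNorm_add ihc ihd (dotProduct_eq_zero_of_mem_span horth hc hd)
  | smul r c _ ihc =>
    rcases (by decide : ∀ r : ZMod 2, r = 0 ∨ r = 1) r with rfl | rfl
    · simp
    · simpa

end BinaryCode

theorem gen3_mul_gen3 {v : ℕ} (b₁ b₂ : Finset (Fin v)) :
    gen3 b₁ * gen3 b₂ = gen3 (b₁ ∩ b₂) := by
  ext (i | i)
  · by_cases h₁ : i ∈ b₁ <;> by_cases h₂ : i ∈ b₂ <;> simp [gen3, chi, h₁, h₂]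
  · simp [gen3]

theorem hammingNorm_gen3 {v : ℕ} (b : Finset (Fin v)) : hammingNorm (gen3 b) = #b + 3 := by
  rw [hammingNorm, card_filter, Fintype.sum_sum_type]
  simp [gen3, chi]

theorem gen3_dotProduct_gen3 {v : ℕ} (b₁ b₂ : Finset (Fin v)) :
    gen3 b₁ ⬝ᵥ gen3 b₂ = (#(b₁ ∩ b₂) + 3 : ℕ) := by
  rw [ZMod.dotProduct_eq_hammingNorm_mul, gen3_mul_gen3, hammingNorm_gen3]

theorem C3_doubly_even_general (v k x y : ℕ) (𝓑 : Finset (Finset (Fin v)))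
    (hk : ∀ b ∈ 𝓑, b.card = k)
    (hquasi : ∀ b₁ ∈ 𝓑, ∀ b₂ ∈ 𝓑, b₁ ≠ b₂ →
      (b₁ ∩ b₂).card = x ∨ (b₁ ∩ b₂).card = y)
    (hkmod : k % 4 = 1) (hxodd : Odd x) (hyodd : Odd y) :
    ∀ c ∈ Submodule.span (ZMod 2) (gen3 '' (𝓑 : Set (Finset (Fin v)))), 4 ∣ wt c := by
  intro c hc
  show 4 ∣ hammingNorm c
  refine ZMod.four_dvd_hammingNorm_of_mem_span ?_ ?_ hc
  · rintro _ ⟨b, hb, rfl⟩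
    rw [hammingNorm_gen3, hk b hb]
    omega
  · rintro _ ⟨b₁, hb₁, rfl⟩ _ ⟨b₂, hb₂, rfl⟩
    have hodd : Odd #(b₁ ∩ b₂) := by
      by_cases h : b₁ = b₂
      · rw [h, inter_self, hk b₂ hb₂, Nat.odd_iff]
        omega
      · rcases hquasi b₁ hb₁ b₂ hb₂ h with h | h <;> rwa [h]
    rw [gen3_dotProduct_gen3, ZMod.natCast_eq_zero_iff, ← even_iff_two_dvd]
    exact hodd.add_odd (by decide)

/-- If `𝓑` is the block set of a quasi-symmetric 2-(v,k,λ) design with intersection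
numbers `x` and `y`, where `k ≡ 1 (mod 4)` and both `x` and `y` are odd, then the
linear span `C₃ ⊆ 𝔽₂^{v+3}` of the vectors `(χ_B, 1, 1, 1)` over the blocks `B` is
doubly even: every codeword has weight divisible by 4. -/
theorem C3_doubly_even (v k lam x y : ℕ) (𝓑 : Finset (Finset (Fin v)))
    (hk : ∀ b ∈ 𝓑, b.card = k)
    (hlam : ∀ T : Finset (Fin v), T.card = 2 → (𝓑.filter fun b => T ⊆ b).card = lam)
    (hxy : x < y)
    (hquasi : ∀ b₁ ∈ 𝓑, ∀ b₂ ∈ 𝓑, b₁ ≠ b₂ →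
      (b₁ ∩ b₂).card = x ∨ (b₁ ∩ b₂).card = y)
    (hkmod : k % 4 = 1) (hxodd : Odd x) (hyodd : Odd y) :
    ∀ c ∈ Submodule.span (ZMod 2) (gen3 '' (𝓑 : Set (Finset (Fin v)))), 4 ∣ wt c :=
  C3_doubly_even_general v k x y 𝓑 hk hquasi hkmod hxodd hyodd
end
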